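/- For the circle S¹ with geodesic metric of diameter π and any δ with 0 < δ < π, the chromatic number of the open Borsuk graph satisfies χ(Bor(S¹, δ)) = ⌈2π/δ⌉. In particular, the circle can be properly colored with ⌈2π/δ⌉ colors by partitioning it into ⌈2π/δ⌉ half-open arcs each of length ≤ δ, and no proper coloring with fewer colors exists. -/

import Mathlib

/-!
Colouring by `n` half-open arcs of length `2π / n ≤ δ` is proper, since two points of one arc are
at distance less than `δ`. Conversely, if `k δ < 2π` (and `δ < π`), pick `q / p` strictly between
`δ / 2π` and `min (1 / k) (1 / 2)` and look at the `p` points `j · 2π / p`. Some colour class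
contains more than `q` of them, while any two points of a class are within `δ < q · 2π / p`, i.e.
their indices are cyclically closer than `q` in `ℤ / p`; as `2q ≤ p`, such a set of indices has at
most `q` elements.
-/

/-- The circle of circumference `2π` (geodesic metric of diameter `π`). -/
abbrev Circle2pi : Type := AddCircle (2 * Real.pi)

/-- The open Borsuk graph on the circle at scale `δ`: edges join points at
geodesic distance strictly greater than `δ`. -/
def borsukCircle (δ : ℝ) : SimpleGraph Circle2pi :=
  SimpleGraph.fromRel (fun x y => δ < dist x y)

open Real Finset

theorem AddCircle.le_norm_coe_of_le_of_le_sub {T a x : ℝ} (hT : 0 < T) (hax : a ≤ x)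
    (hxa : x ≤ T - a) : a ≤ ‖(x : AddCircle T)‖ := by
  rcases lt_or_ge a 0 with ha | ha
  · exact ha.le.trans (norm_nonneg _)
  have hT' : |T| / 2 = T / 2 := by rw [abs_of_pos hT]
  rcases le_total x (T / 2) with hx | hx
  · rw [(norm_coe_eq_abs_iff T hT.ne').2 (by rw [hT', abs_of_nonneg (by linarith)]; exact hx),
      abs_of_nonneg (by linarith)]
    exact hax
  · rw [← sub_zero (x : AddCircle T), ← coe_period, ← coe_sub, (norm_coe_eq_abs_iff T hT.ne').2
      (by rw [hT', abs_of_nonpos (by linarith)]; linarith), abs_of_nonpos (by linarith)]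
    linarith

theorem Finset.card_le_of_pairwise_cyclically_close {p q : ℕ} (hqp : 2 * q ≤ p) {F : Finset ℕ}
    (hFp : ∀ j ∈ F, j < p) (hF : ∀ i ∈ F, ∀ j ∈ F, i ≤ j → j - i < q ∨ p - q < j - i) :
    F.card ≤ q := by
  rcases F.eq_empty_or_nonempty with rfl | hne
  · simp
  set i₀ := F.min' hne
  have hi₀ : ∀ j ∈ F, i₀ ≤ j := fun j hj => F.min'_le j hj
  have hnear : ∀ j ∈ F, j - i₀ < q ∨ p - q < j - i₀ :=
    fun j hj => hF i₀ (F.min'_mem hne) j hj (hi₀ j hj)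
  -- offsets beyond `p - q` are shifted down by `p - q`; a collision means two points `p - q` apart
  let fold : ℕ → ℕ := fun j => if j - i₀ < q then j - i₀ else j - i₀ - (p - q)
  calc F.card ≤ (range q).card := card_le_card_of_injOn fold ?_ ?_
    _ = q := card_range q
  · intro j hj
    have := hFp j hj
    have := hnear j hj
    simp only [fold, coe_range, Set.mem_Iio]
    split_ifs <;> omega
  · intro i hi j hj hij
    have := hi₀ i hi; have := hi₀ j hj
    have := hnear i hi; have := hnear j hj
    have := hFp i hi; have := hFp j hj
    have := hF i hi j hj; have := hF j hj i hi
    simp only [fold] at hij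
    split_ifs at hij <;> omega

theorem exists_nat_div_btwn {a b : ℝ} (ha : 0 ≤ a) (hab : a < b) :
    ∃ q p : ℕ, 0 < p ∧ a < q / p ∧ q / p < b := by
  obtain ⟨r, har, hrb⟩ := exists_rat_btwn hab
  have hr : 0 ≤ r := by exact_mod_cast ha.trans har.le
  have hcast : ((r.num.toNat : ℕ) : ℝ) / r.den = r := by
    have hnum : ((r.num.toNat : ℕ) : ℝ) = r.num := by
      exact_mod_cast Int.toNat_of_nonneg (Rat.num_nonneg.2 hr)
    rw [hnum, Rat.cast_def]
  exact ⟨r.num.toNat, r.den, r.den_pos, hcast ▸ har, hcast ▸ hrb⟩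

local instance : Fact (0 < 2 * π) := ⟨two_pi_pos⟩

theorem borsukCircle_adj {δ : ℝ} {x y : Circle2pi} :
    (borsukCircle δ).Adj x y ↔ x ≠ y ∧ δ < dist x y := by
  simp [borsukCircle, dist_comm]

theorem borsukCircle_dist_le_of_color_eq {δ : ℝ} (hδ : 0 ≤ δ) {α : Type*}
    (C : (borsukCircle δ).Coloring α) {x y : Circle2pi} (h : C x = C y) : dist x y ≤ δ := by
  by_contra! hlt
  refine C.valid (borsukCircle_adj.2 ⟨?_, hlt⟩) h
  rintro rfl
  simp only [dist_self] at hlt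
  linarith

theorem borsukCircle_colorable {δ : ℝ} {n : ℕ} (hn : 2 * π ≤ n * δ) :
    (borsukCircle δ).Colorable n := by
  have hn0 : (0 : ℝ) < n := Nat.cast_pos.2 <| Nat.pos_of_ne_zero fun h => by
    rw [h, Nat.cast_zero, zero_mul] at hn
    linarith [pi_pos]
  set s := 2 * π / n
  have hs : 0 < s := by positivity
  have hsδ : s ≤ δ := by rw [div_le_iff₀ hn0]; linarith
  let v : Circle2pi → ℝ := fun x => AddCircle.equivIco (2 * π) 0 x
  have hv : ∀ x, 0 ≤ v x ∧ v x < 2 * π := fun x => by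
    simpa using (AddCircle.equivIco (2 * π) 0 x).2
  have hcolor : ∀ x, ⌊v x / s⌋₊ < n := fun x => by
    rw [Nat.floor_lt (div_nonneg (hv x).1 hs.le), div_lt_iff₀ hs]
    simpa [s, mul_div_cancel₀ _ hn0.ne'] using (hv x).2
  refine ⟨SimpleGraph.Coloring.mk (fun x => ⟨⌊v x / s⌋₊, hcolor x⟩) fun {x y} hxy hxy' => ?_⟩
  have hfloor : ⌊v x / s⌋ = ⌊v y / s⌋ := by
    rw [← Int.natCast_floor_eq_floor (div_nonneg (hv x).1 hs.le),
      ← Int.natCast_floor_eq_floor (div_nonneg (hv y).1 hs.le)]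
    exact_mod_cast congrArg Fin.val hxy'
  have hclose : |v x - v y| < s := by
    have := Int.abs_sub_lt_one_of_floor_eq_floor hfloor
    rwa [← sub_div, abs_div, abs_of_pos hs, div_lt_one hs] at this
  have hdist : dist x y ≤ |v x - v y| := by
    have hvx : ((v x : ℝ) : Circle2pi) = x := AddCircle.coe_equivIco
    have hvy : ((v y : ℝ) : Circle2pi) = y := AddCircle.coe_equivIco
    calc dist x y = ‖((v x - v y : ℝ) : Circle2pi)‖ := by
          rw [AddCircle.coe_sub, hvx, hvy, dist_eq_norm]
      _ ≤ ‖v x - v y‖ := QuotientAddGroup.norm_mk_le_norm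
      _ = |v x - v y| := Real.norm_eq_abs _
  exact (borsukCircle_adj.1 hxy).2.not_ge (hdist.trans (hclose.le.trans hsδ))

theorem borsukCircle_not_colorable {δ : ℝ} (hδ : 0 ≤ δ) (hδπ : δ < π) {k : ℕ}
    (hk : k * δ < 2 * π) : ¬ (borsukCircle δ).Colorable k := by
  rintro ⟨C⟩
  obtain ⟨q, p, hp, hδq, hqk, hq2⟩ :
      ∃ q p : ℕ, 0 < p ∧ δ * p < 2 * π * q ∧ k * q < p ∧ 2 * q ≤ p := by
    have hc : (max k 2 : ℕ) * δ < 2 * π := by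
      rcases le_total k 2 with h | h
      · rw [max_eq_right h]; push_cast; linarith
      · rwa [max_eq_left h]
    obtain ⟨q, p, hp, h₁, h₂⟩ := exists_nat_div_btwn (div_nonneg hδ two_pi_pos.le)
      (show δ / (2 * π) < 1 / (max k 2 : ℕ) by
        rw [div_lt_div_iff₀ two_pi_pos (by positivity)]; linarith)
    have hpR : (0 : ℝ) < p := by exact_mod_cast hp
    rw [div_lt_div_iff₀ two_pi_pos hpR] at h₁
    rw [div_lt_div_iff₀ hpR (by positivity), one_mul] at h₂
    have hkq : q * max k 2 < p := by exact_mod_cast h₂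
    refine ⟨q, p, hp, by linarith, ?_, ?_⟩
    · nlinarith [le_max_left k 2]
    · nlinarith [le_max_right k 2]
  set θ := 2 * π / p
  have hpR : (0 : ℝ) < p := by exact_mod_cast hp
  have hδθ : δ < q * θ := by
    rw [mul_div_assoc', lt_div_iff₀ hpR]; linarith
  let e : ℕ → Circle2pi := fun j => ((j * θ : ℝ) : Circle2pi)
  obtain ⟨b, -, hb⟩ := exists_lt_card_fiber_of_mul_lt_card_of_maps_to
    (s := range p) (t := univ) (f := C ∘ e) (fun _ _ => mem_univ _) (by simpa using hqk)
  refine hb.not_ge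
    (card_le_of_pairwise_cyclically_close hq2 (fun j hj => ?_) fun i hi j hj hij => ?_)
  · exact mem_range.1 (mem_filter.1 hj).1
  have hdist : ‖(((j - i : ℕ) * θ : ℝ) : Circle2pi)‖ ≤ δ := by
    rw [Nat.cast_sub hij, sub_mul, AddCircle.coe_sub, ← dist_eq_norm]
    exact borsukCircle_dist_le_of_color_eq hδ C ((mem_filter.1 hj).2.trans (mem_filter.1 hi).2.symm)
  by_contra! hfar
  have hθ : (p : ℝ) * θ = 2 * π := mul_div_cancel₀ _ hpR.ne'
  have := AddCircle.le_norm_coe_of_le_of_le_sub (a := q * θ) (x := (j - i : ℕ) * θ) two_pi_pos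
    (by gcongr; exact_mod_cast hfar.1)
    (by rw [← hθ, ← sub_mul, ← Nat.cast_sub (by omega)]
        exact mul_le_mul_of_nonneg_right (Nat.cast_le.2 hfar.2) (by positivity))
  linarith

theorem stmt15 (δ : ℝ) (hδ : 0 < δ) (hδπ : δ < Real.pi) :
    (borsukCircle δ).chromaticNumber = (⌈2 * Real.pi / δ⌉₊ : ℕ∞) := by
  obtain ⟨m, hm⟩ : ∃ m, ⌈2 * π / δ⌉₊ = m + 1 :=
    Nat.exists_eq_add_one_of_ne_zero (Nat.ceil_pos.2 (by positivity)).ne'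
  have hcolorable : 2 * π ≤ (m + 1 : ℕ) * δ := by
    rw [← hm, ← div_le_iff₀ hδ]; exact Nat.le_ceil _
  have hnot : m * δ < 2 * π := by
    rw [← lt_div_iff₀ hδ, ← Nat.lt_ceil, hm]; exact m.lt_succ_self
  rw [hm, Nat.cast_succ, SimpleGraph.chromaticNumber_eq_iff_colorable_not_colorable]
  exact ⟨borsukCircle_colorable hcolorable, borsukCircle_not_colorable hδ.le hδπ hnot⟩
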